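/- arXiv:1402.4231 — 2 statements merged into one kernel-verified Lean document; each statement's English description precedes it below -/
import Mathlib

section
/- Let K₁ and K₂ be triangulated closed surfaces on disjoint vertex sets V₁ and V₂, centrally symmetric under involutions σ₁ and σ₂ respectively. For t = 1, 2 suppose F_t is a triangle of K_t with image F_t' = σ_t(F_t), such that no edge of K_t joins a vertex of F_t to a vertex of F_t' (in particular F_t and F_t' are disjoint). Let φ : F₁ → F₂ be any bijection and let ψ : F₁' → F₂' be the bijection ψ = σ₂ ∘ φ ∘ σ₁. Form the complex K on the quotient vertex set (V₁ ∪ V₂)/(x ∼ φ(x) for x ∈ F₁, y ∼ ψ(y) for y ∈ F₁'), whose triangles are all triangles of K₁ other than F₁, F₁' together with all triangles of K₂ other than F₂, F₂' (vertices taken in the quotient). Then K is a triangulated closed surface, K is centrally symmetric under the involution induced by σ₁ and σ₂ (which agree on identified vertices), and χ(K) = χ(K₁) + χ(K₂) − 4. -/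
/-- A simple graph is a single cycle iff it is connected and 2-regular. -/
def IsSingleCycle {α : Type*} (G : SimpleGraph α) : Prop :=
  G.Connected ∧ ∀ a : α, (G.neighborSet a).ncard = 2

section Tri

variable {V : Type*} [DecidableEq V]

/-- The edges of a family of simplices: the 2-element subsets of its members. -/
def triEdges (K : Finset (Finset V)) : Finset (Finset V) :=
  K.biUnion fun T => T.powersetCard 2

/-- The underlying graph of a family of simplices. -/
def cplxGraph (K : Finset (Finset V)) : SimpleGraph V where
  Adj a b := a ≠ b ∧ ∃ T ∈ K, a ∈ T ∧ b ∈ T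
  symm := by
    refine ⟨?_⟩
    rintro a b ⟨h, T, hT, ha, hb⟩
    exact ⟨h.symm, T, hT, hb, ha⟩
  loopless := ⟨fun a h => h.1 rfl⟩

/-- The link graph of a vertex `v`: `a,b` are joined iff `{v,a,b}` is a simplex. -/
def linkGraph (K : Finset (Finset V)) (v : V) : SimpleGraph V where
  Adj a b := a ≠ b ∧ a ≠ v ∧ b ≠ v ∧ ({v, a, b} : Finset V) ∈ K
  symm := by
    refine ⟨?_⟩
    rintro a b ⟨h1, h2, h3, h4⟩
    refine ⟨h1.symm, h3, h2, ?_⟩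
    rwa [Finset.pair_comm b a]
  loopless := ⟨fun a h => h.1 rfl⟩

/-- Euler characteristic of a triangle family on vertex set `W`. -/
def eulerCharOn (W : Finset V) (K : Finset (Finset V)) : ℤ :=
  (W.card : ℤ) - ((triEdges K).card : ℤ) + (K.card : ℤ)

/-- `K` is a triangulated closed surface on the vertex set `W`. -/
def IsTriSurfaceOn (W : Finset V) (K : Finset (Finset V)) : Prop :=
  (∀ T ∈ K, T.card = 3 ∧ T ⊆ W) ∧
  ((cplxGraph K).induce (W : Set V)).Connected ∧
  (∀ e ∈ triEdges K, (K.filter fun T => e ⊆ T).card = 2) ∧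
  (∀ v ∈ W, IsSingleCycle ((linkGraph K v).induce ((cplxGraph K).neighborSet v)))

/-- `K` is centrally symmetric on vertex set `W` under the involution `σ`. -/
def IsCSOn (W : Finset V) (K : Finset (Finset V)) (σ : V → V) : Prop :=
  Set.MapsTo σ (W : Set V) (W : Set V) ∧
  (∀ v ∈ W, σ (σ v) = v) ∧
  (∀ T ∈ K, T.image σ ∈ K) ∧
  (∀ v ∈ W, σ v ≠ v) ∧
  (∀ e ∈ triEdges K, e.image σ ≠ e) ∧
  (∀ T ∈ K, T.image σ ≠ T)

/-- Orientability of a triangulated surface. -/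
def IsOrientableTri (K : Finset (Finset V)) : Prop :=
  ∃ ori : Finset V → V → V → Bool,
    (∀ T ∈ K, ∀ a ∈ T, ∀ b ∈ T, a ≠ b → ori T a b = !ori T b a) ∧
    (∀ T ∈ K, ∀ a b c : V, a ≠ b → b ≠ c → a ≠ c → T = {a, b, c} → ori T a b = ori T b c) ∧
    (∀ T ∈ K, ∀ T' ∈ K, T ≠ T' → ∀ a b : V, a ≠ b → a ∈ T → b ∈ T → a ∈ T' → b ∈ T' →
      ori T a b = ori T' b a)

end Tri

/-- The identifications used to glue: a vertex `a ∈ F₁` is identified with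
`φ a ∈ F₂`, and a vertex `a ∈ σ₁(F₁)` is identified with `σ₂ (φ (σ₁ a))`
(i.e. `ψ = σ₂ ∘ φ ∘ σ₁`). -/
def Glue {V₁ V₂ : Type*} [DecidableEq V₁] [DecidableEq V₂]
    (σ₁ : V₁ → V₁) (σ₂ : V₂ → V₂) (F₁ : Finset V₁) (φ : V₁ → V₂)
    (x y : V₁ ⊕ V₂) : Prop :=
  ∃ a : V₁, x = Sum.inl a ∧
    ((a ∈ F₁ ∧ y = Sum.inr (φ a)) ∨
     (a ∈ F₁.image σ₁ ∧ y = Sum.inr (σ₂ (φ (σ₁ a)))))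

/-- The glued complex: all triangles of `K₁` other than `F₁, σ₁(F₁)` together
with all triangles of `K₂` other than `F₂, σ₂(F₂)`, with vertices taken in the
quotient vertex set via `q`. -/
def glueComplex {V₁ V₂ W : Type*} [DecidableEq V₁] [DecidableEq V₂] [DecidableEq W]
    (K₁ : Finset (Finset V₁)) (K₂ : Finset (Finset V₂)) (σ₁ : V₁ → V₁) (σ₂ : V₂ → V₂)
    (F₁ : Finset V₁) (F₂ : Finset V₂) (q : V₁ ⊕ V₂ → W) : Finset (Finset W) :=
  ((K₁.erase F₁).erase (F₁.image σ₁)).image (Finset.image (q ∘ Sum.inl)) ∪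
  ((K₂.erase F₂).erase (F₂.image σ₂)).image (Finset.image (q ∘ Sum.inr))

/-
Removing the triangles `F₁, σ₁ F₁` from `K₁` and `F₂, σ₂ F₂` from `K₂` and identifying their
boundaries is a connected sum performed twice. Because no edge joins `F` to `σ F`, the only
identifications of faces are those of the six boundary vertices and six boundary edges; each
boundary edge loses one triangle on either side, so every edge still lies in exactly two
triangles. The link of a vertex of `F₁` is its link cycle in `K₁` cut open at `F₁`, joined at
both ends to the corresponding path in `K₂`, hence still connected, and two-regularity is local.
Counting the lost faces (6 vertices, 6 edges, 4 triangles) gives `χ(K₁) + χ(K₂) - 4`, and since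
the involutions commute with the identifications and permute the removed triangles, central
symmetry passes to the glued complex.
-/

open Finset

lemma IsSingleCycle.connected_deleteEdges {α : Type*} [Finite α] {G : SimpleGraph α}
    (h : IsSingleCycle G) {u v : α} (huv : G.Adj u v) :
    (G.deleteEdges {s(u, v)}).Connected :=
  h.1.connected_delete_edge_of_not_isBridge <| by
    rw [SimpleGraph.isBridge_iff, not_not]
    exact SimpleGraph.IsCycles.reachable_deleteEdges huv fun w _ => h.2 w

lemma SimpleGraph.Connected.induce_image {α β : Type*} {G : SimpleGraph α} {H : SimpleGraph β}
    {f : α → β} (hf : ∀ {a b}, G.Adj a b → H.Adj (f a) (f b)) {s : Set α}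
    (hs : (G.induce s).Connected) : (H.induce (f '' s)).Connected :=
  hs.map (⟨fun x => ⟨f x, Set.mem_image_of_mem f x.2⟩, hf⟩ : G.induce s →g H.induce (f '' s))
    (by rintro ⟨_, x, hx, rfl⟩; exact ⟨⟨x, hx⟩, rfl⟩)

section Complex

variable {V : Type*} [DecidableEq V] {K : Finset (Finset V)}

lemma mem_triEdges {e : Finset V} : e ∈ triEdges K ↔ ∃ T ∈ K, e ⊆ T ∧ e.card = 2 := by
  simp [triEdges, mem_powersetCard]

lemma mem_triEdges_of_subset {T e : Finset V} (hT : T ∈ K) (he : e ⊆ T) (hc : e.card = 2) :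
    e ∈ triEdges K :=
  mem_triEdges.2 ⟨T, hT, he, hc⟩

lemma pair_mem_triEdges {T : Finset V} {a b : V} (hT : T ∈ K) (ha : a ∈ T) (hb : b ∈ T)
    (hab : a ≠ b) : ({a, b} : Finset V) ∈ triEdges K :=
  mem_triEdges_of_subset hT (insert_subset ha (singleton_subset_iff.2 hb)) (card_pair hab)

lemma card_eq_two_of_mem_triEdges {e : Finset V} (he : e ∈ triEdges K) : e.card = 2 := by
  obtain ⟨_, _, _, hc⟩ := mem_triEdges.1 he
  exact hc

lemma triEdges_mono {K' : Finset (Finset V)} (h : K ⊆ K') : triEdges K ⊆ triEdges K' :=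
  biUnion_subset_biUnion_of_subset_left _ h

lemma triEdges_union {K' : Finset (Finset V)} :
    triEdges (K ∪ K') = triEdges K ∪ triEdges K' :=
  union_biUnion

lemma triEdges_image {U : Type*} [DecidableEq U] {f : V → U} (hf : Function.Injective f) :
    triEdges (K.image (image f)) = (triEdges K).image (image f) := by
  ext e
  simp only [mem_triEdges, mem_image, exists_exists_and_eq_and]
  constructor
  · rintro ⟨T, hT, heT, hc⟩
    obtain ⟨e₁, he₁, rfl⟩ := subset_image_iff.1 heT
    rw [card_image_of_injective _ hf] at hc
    exact ⟨e₁, ⟨T, hT, he₁, hc⟩, rfl⟩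
  · rintro ⟨e₁, ⟨T, hT, he₁, hc⟩, rfl⟩
    exact ⟨T, hT, image_subset_image he₁, by rwa [card_image_of_injective _ hf]⟩

lemma exists_eq_triple_of_card_eq_three {T : Finset V} {v x : V} (h3 : T.card = 3)
    (hv : v ∈ T) (hx : x ∈ T) (hvx : v ≠ x) : ∃ y, y ≠ v ∧ y ≠ x ∧ T = {v, x, y} := by
  have hx' : x ∈ T.erase v := mem_erase.2 ⟨hvx.symm, hx⟩
  obtain ⟨y, hy⟩ := card_eq_one.1 <|
    show ((T.erase v).erase x).card = 1 by rw [card_erase_of_mem hx', card_erase_of_mem hv, h3]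
  have hyT : y ∈ (T.erase v).erase x := hy ▸ mem_singleton_self y
  refine ⟨y, ne_of_mem_erase (mem_of_mem_erase hyT), ne_of_mem_erase hyT, ?_⟩
  rw [← insert_erase hv, ← insert_erase hx', hy]

lemma linkGraph_erase_of_notMem {T : Finset V} {v : V} (hv : v ∉ T) :
    linkGraph (K.erase T) v = linkGraph K v := by
  ext a b
  simp only [linkGraph, mem_erase, and_congr_right_iff]
  intro _ _ _
  exact and_iff_right (fun h => hv (h ▸ mem_insert_self v _))

/-- The neighbours of `x` in the link of `v` are the third vertices of the triangles
containing the edge `{v, x}`. -/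
lemma ncard_neighborSet_linkGraph (h3 : ∀ T ∈ K, T.card = 3)
    (h2 : ∀ e ∈ triEdges K, (K.filter fun T => e ⊆ T).card = 2) (v : V)
    (x : (cplxGraph K).neighborSet v) :
    (((linkGraph K v).induce ((cplxGraph K).neighborSet v)).neighborSet x).ncard = 2 := by
  obtain ⟨x, hvx, T, hT, hvT, hxT⟩ := x
  rw [← h2 _ (pair_mem_triEdges hT hvT hxT hvx), ← Set.ncard_coe_finset]
  refine Set.ncard_congr (fun y _ => {v, x, y.1}) ?_ ?_ ?_
  · rintro y ⟨-, -, -, hy⟩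
    exact mem_coe.2 (mem_filter.2 ⟨hy, by simp [insert_subset_iff]⟩)
  · rintro y y' ⟨hxy, -, hyv, -⟩ - h
    have : y.1 ∈ ({v, x, y'.1} : Finset V) := h ▸ by simp
    simp only [mem_insert, mem_singleton] at this
    exact Subtype.ext (this.resolve_left hyv |>.resolve_left (Ne.symm hxy))
  · intro R hR
    obtain ⟨hRK, hsub⟩ := mem_filter.1 (mem_coe.1 hR)
    obtain ⟨y, hyv, hyx, rfl⟩ := exists_eq_triple_of_card_eq_three (h3 R hRK)
      (hsub (mem_insert_self _ _)) (hsub (by simp)) hvx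
    exact ⟨⟨y, hyv.symm, _, hRK, by simp, by simp⟩, ⟨hyx.symm, hvx.symm, hyv, hRK⟩, rfl⟩

/-- Removing one triangle at `v` cuts the link cycle of `v` open into a path, which is
still connected. -/
lemma connected_induce_linkGraph_erase [Finite V] (h3 : ∀ T ∈ K, T.card = 3) {v : V}
    (hcyc : IsSingleCycle ((linkGraph K v).induce ((cplxGraph K).neighborSet v)))
    {T : Finset V} (hT : T ∈ K) (hv : v ∈ T) :
    ((linkGraph (K.erase T) v).induce ((cplxGraph K).neighborSet v)).Connected := by
  obtain ⟨u, hu⟩ : (T.erase v).Nonempty := by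
    rw [← card_pos, card_erase_of_mem hv, h3 T hT]; norm_num
  have hvu : v ≠ u := (ne_of_mem_erase hu).symm
  obtain ⟨w, hwv, hwu, rfl⟩ :=
    exists_eq_triple_of_card_eq_three (h3 T hT) hv (mem_of_mem_erase hu) hvu
  have huN : u ∈ (cplxGraph K).neighborSet v := ⟨hvu, _, hT, by simp, by simp⟩
  have hwN : w ∈ (cplxGraph K).neighborSet v := ⟨hwv.symm, _, hT, by simp, by simp⟩
  have hadj : ((linkGraph K v).induce ((cplxGraph K).neighborSet v)).Adj ⟨u, huN⟩ ⟨w, hwN⟩ :=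
    ⟨hwu.symm, hvu.symm, hwv, hT⟩
  refine (hcyc.connected_deleteEdges hadj).mono ?_
  rintro ⟨x, hx⟩ ⟨y, hy⟩ ⟨⟨hxy, hxv, hyv, hmem⟩, hne⟩
  refine ⟨hxy, hxv, hyv, mem_erase.2 ⟨fun heq => hne ?_, hmem⟩⟩
  have hx' : x ∈ ({v, u, w} : Finset V) := heq ▸ by simp
  have hy' : y ∈ ({v, u, w} : Finset V) := heq ▸ by simp
  simp only [Function.Embedding.coe_subtype, ne_eq] at hxy hxv hyv
  simp only [mem_insert, mem_singleton, hxv, hyv, false_or] at hx' hy'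
  simp only [SimpleGraph.fromEdgeSet_adj, Set.mem_singleton_iff, Sym2.eq_iff, Subtype.mk.injEq,
    ne_eq]
  grind

end Complex

/-- Two triangulated surfaces `K₁`, `K₂`, each with two triangles `F, F'` joined by no edge,
mapped injectively into `W` so that the vertices of `F₁` are identified with those of `F₂`,
those of `F₁'` with those of `F₂'`, and nothing else; together they cover `W`. -/
structure TriangleGluing (X Y W : Type*) [Fintype X] [DecidableEq X] [Fintype Y]
    [DecidableEq Y] [DecidableEq W] where
  K₁ : Finset (Finset X)
  K₂ : Finset (Finset Y)
  F₁ : Finset X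
  F₁' : Finset X
  F₂ : Finset Y
  F₂' : Finset Y
  ι₁ : X → W
  ι₂ : Y → W
  surface₁ : IsTriSurfaceOn univ K₁
  surface₂ : IsTriSurfaceOn univ K₂
  F₁_mem : F₁ ∈ K₁
  F₁'_mem : F₁' ∈ K₁
  F₂_mem : F₂ ∈ K₂
  F₂'_mem : F₂' ∈ K₂
  pair_notMem₁ : ∀ a ∈ F₁, ∀ b ∈ F₁', ({a, b} : Finset X) ∉ triEdges K₁
  pair_notMem₂ : ∀ a ∈ F₂, ∀ b ∈ F₂', ({a, b} : Finset Y) ∉ triEdges K₂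
  injective_ι₁ : Function.Injective ι₁
  injective_ι₂ : Function.Injective ι₂
  image_F₁ : F₁.image ι₁ = F₂.image ι₂
  image_F₁' : F₁'.image ι₁ = F₂'.image ι₂
  mem_of_ι₁_eq_ι₂ : ∀ a b, ι₁ a = ι₂ b → a ∈ F₁ ∪ F₁'
  cover : ∀ w, (∃ a, ι₁ a = w) ∨ (∃ b, ι₂ b = w)

namespace TriangleGluing

variable {X Y W : Type*} [Fintype X] [DecidableEq X] [Fintype Y] [DecidableEq Y]
  [DecidableEq W] (S : TriangleGluing X Y W)

def kept₁ : Finset (Finset X) := (S.K₁.erase S.F₁).erase S.F₁'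

def kept₂ : Finset (Finset Y) := (S.K₂.erase S.F₂).erase S.F₂'

def glued : Finset (Finset W) :=
  S.kept₁.image (image S.ι₁) ∪ S.kept₂.image (image S.ι₂)

lemma card_eq_three_of_mem {T : Finset X} (hT : T ∈ S.K₁) : T.card = 3 := (S.surface₁.1 T hT).1

lemma card_F₁ : S.F₁.card = 3 := S.card_eq_three_of_mem S.F₁_mem

lemma card_F₁' : S.F₁'.card = 3 := S.card_eq_three_of_mem S.F₁'_mem

lemma disjoint_F₁ : Disjoint S.F₁ S.F₁' := by
  refine disjoint_left.2 fun a ha ha' => ?_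
  obtain ⟨c, hc⟩ : (S.F₁.erase a).Nonempty := by
    rw [← card_pos, card_erase_of_mem ha, S.card_F₁]; norm_num
  exact S.pair_notMem₁ c (mem_of_mem_erase hc) a ha'
    (pair_mem_triEdges S.F₁_mem (mem_of_mem_erase hc) ha (ne_of_mem_erase hc))

lemma F₁_nonempty : S.F₁.Nonempty := card_pos.1 (by rw [S.card_F₁]; norm_num)

lemma F₁_ne_F₁' : S.F₁ ≠ S.F₁' := fun h =>
  disjoint_left.1 S.disjoint_F₁ S.F₁_nonempty.choose_spec (h ▸ S.F₁_nonempty.choose_spec)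

lemma mem_kept₁ {T : Finset X} : T ∈ S.kept₁ ↔ T ∈ S.K₁ ∧ T ≠ S.F₁ ∧ T ≠ S.F₁' := by
  simp only [kept₁, mem_erase]
  tauto

lemma kept₁_subset : S.kept₁ ⊆ S.K₁ := fun _ hT => (S.mem_kept₁.1 hT).1

lemma mem_glued {T : Finset W} :
    T ∈ S.glued ↔ (∃ T₁ ∈ S.kept₁, T₁.image S.ι₁ = T) ∨ (∃ T₂ ∈ S.kept₂, T₂.image S.ι₂ = T) := by
  simp [glued]

lemma mem_of_ι₂_eq_ι₁ (b : Y) (a : X) (h : S.ι₂ b = S.ι₁ a) : b ∈ S.F₂ ∪ S.F₂' := by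
  have hmem : S.ι₁ a ∈ (S.F₁ ∪ S.F₁').image S.ι₁ :=
    mem_image_of_mem _ (S.mem_of_ι₁_eq_ι₂ a b h.symm)
  rw [image_union, S.image_F₁, S.image_F₁', ← image_union] at hmem
  obtain ⟨b', hb', hb'b⟩ := mem_image.1 hmem
  exact S.injective_ι₂ (hb'b.trans h.symm) ▸ hb'

/- `flip` and `swap` are the symmetries of the setting: most statements are proved for `ι₁` and
`F₁` only and transported along them. -/
def flip : TriangleGluing X Y W where
  K₁ := S.K₁
  K₂ := S.K₂
  F₁ := S.F₁'
  F₁' := S.F₁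
  F₂ := S.F₂'
  F₂' := S.F₂
  ι₁ := S.ι₁
  ι₂ := S.ι₂
  surface₁ := S.surface₁
  surface₂ := S.surface₂
  F₁_mem := S.F₁'_mem
  F₁'_mem := S.F₁_mem
  F₂_mem := S.F₂'_mem
  F₂'_mem := S.F₂_mem
  pair_notMem₁ a ha b hb := pair_comm a b ▸ S.pair_notMem₁ b hb a ha
  pair_notMem₂ a ha b hb := pair_comm a b ▸ S.pair_notMem₂ b hb a ha
  injective_ι₁ := S.injective_ι₁
  injective_ι₂ := S.injective_ι₂
  image_F₁ := S.image_F₁'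
  image_F₁' := S.image_F₁
  mem_of_ι₁_eq_ι₂ a b h := union_comm S.F₁ S.F₁' ▸ S.mem_of_ι₁_eq_ι₂ a b h
  cover := S.cover

def swap : TriangleGluing Y X W where
  K₁ := S.K₂
  K₂ := S.K₁
  F₁ := S.F₂
  F₁' := S.F₂'
  F₂ := S.F₁
  F₂' := S.F₁'
  ι₁ := S.ι₂
  ι₂ := S.ι₁
  surface₁ := S.surface₂
  surface₂ := S.surface₁
  F₁_mem := S.F₂_mem
  F₁'_mem := S.F₂'_mem
  F₂_mem := S.F₁_mem
  F₂'_mem := S.F₁'_mem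
  pair_notMem₁ := S.pair_notMem₂
  pair_notMem₂ := S.pair_notMem₁
  injective_ι₁ := S.injective_ι₂
  injective_ι₂ := S.injective_ι₁
  image_F₁ := S.image_F₁.symm
  image_F₁' := S.image_F₁'.symm
  mem_of_ι₁_eq_ι₂ := S.mem_of_ι₂_eq_ι₁
  cover w := (S.cover w).symm

lemma flip_kept₁ : S.flip.kept₁ = S.kept₁ := erase_right_comm

lemma flip_glued : S.flip.glued = S.glued := by
  simp only [glued, kept₂, S.flip_kept₁]
  rw [erase_right_comm]
  rfl

lemma swap_glued : S.swap.glued = S.glued := union_comm _ _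

lemma subset_or_subset_of_subset_union {T s : Finset X} (hT : T ∈ S.K₁) (hs : s ⊆ T)
    (hsub : s ⊆ S.F₁ ∪ S.F₁') : s ⊆ S.F₁ ∨ s ⊆ S.F₁' := by
  by_cases h : ∃ a ∈ s, a ∈ S.F₁
  · obtain ⟨a, ha, haF⟩ := h
    refine Or.inl fun b hb => ?_
    rcases eq_or_ne a b with rfl | hab
    · exact haF
    refine (mem_union.1 (hsub hb)).resolve_right fun hbF => ?_
    exact S.pair_notMem₁ a haF b hbF (pair_mem_triEdges hT (hs ha) (hs hb) hab)
  · simp only [not_exists, not_and] at h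
    exact Or.inr fun b hb => (mem_union.1 (hsub hb)).resolve_left (h b hb)

lemma eq_or_eq_of_subset_union {T : Finset X} (hT : T ∈ S.K₁) (hsub : T ⊆ S.F₁ ∪ S.F₁') :
    T = S.F₁ ∨ T = S.F₁' := by
  refine (S.subset_or_subset_of_subset_union hT subset_rfl hsub).imp (fun h => ?_) (fun h => ?_)
  · exact eq_of_subset_of_card_le h (by rw [S.card_eq_three_of_mem hT, S.card_F₁])
  · exact eq_of_subset_of_card_le h (by rw [S.card_eq_three_of_mem hT, S.card_F₁'])

lemma subset_union_of_image_subset {T : Finset X} {T₂ : Finset Y}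
    (h : T.image S.ι₁ ⊆ T₂.image S.ι₂) : T ⊆ S.F₁ ∪ S.F₁' := fun a ha => by
  obtain ⟨b, -, hb⟩ := mem_image.1 (h (mem_image_of_mem _ ha))
  exact S.mem_of_ι₁_eq_ι₂ a b hb.symm

lemma image_ne_image_of_mem_kept₁ {T : Finset X} (hT : T ∈ S.kept₁) (T₂ : Finset Y) :
    T.image S.ι₁ ≠ T₂.image S.ι₂ := fun h => by
  obtain ⟨hTK, hF, hF'⟩ := S.mem_kept₁.1 hT
  exact (S.eq_or_eq_of_subset_union hTK (S.subset_union_of_image_subset h.subset)).elim hF hF'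

lemma disjoint_image_image {A : Finset (Finset X)} (hA : A ⊆ S.kept₁) (B : Finset (Finset Y)) :
    Disjoint (A.image (image S.ι₁)) (B.image (image S.ι₂)) := by
  simp only [disjoint_left, mem_image, not_exists, not_and]
  rintro _ ⟨T, hT, rfl⟩ T₂ - h
  exact S.image_ne_image_of_mem_kept₁ (hA hT) T₂ h.symm

lemma exists_image_eq_of_subset_F₁ {e : Finset X} (he : e ⊆ S.F₁) :
    ∃ e₂ ⊆ S.F₂, e₂.image S.ι₂ = e.image S.ι₁ ∧ e₂.card = e.card := by
  obtain ⟨e₂, he₂, heq⟩ := subset_image_iff.1 (S.image_F₁ ▸ image_subset_image he)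
  refine ⟨e₂, he₂, heq, ?_⟩
  rw [← card_image_of_injective e₂ S.injective_ι₂, heq, card_image_of_injective e S.injective_ι₁]

lemma filter_kept₁ (p : Finset X → Prop) [DecidablePred p] :
    S.kept₁.filter p = ((S.K₁.filter p).erase S.F₁).erase S.F₁' := by
  rw [kept₁, filter_erase, filter_erase]

lemma card_filter_kept₁_of_subset_F₁ {e : Finset X} (he : e ⊆ S.F₁) (hc : e.card = 2) :
    (S.kept₁.filter (e ⊆ ·)).card = 1 := by
  have hF₁ : S.F₁ ∈ S.K₁.filter (e ⊆ ·) := mem_filter.2 ⟨S.F₁_mem, he⟩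
  have hF₁' : S.F₁' ∉ (S.K₁.filter (e ⊆ ·)).erase S.F₁ := fun h => by
    obtain ⟨a, ha⟩ : e.Nonempty := card_pos.1 (by omega)
    exact disjoint_left.1 S.disjoint_F₁ (he ha) ((mem_filter.1 (mem_of_mem_erase h)).2 ha)
  rw [filter_kept₁, erase_eq_of_notMem hF₁', card_erase_of_mem hF₁,
    S.surface₁.2.2.1 e (mem_triEdges_of_subset S.F₁_mem he hc)]

lemma filter_kept₁_of_not_subset {e : Finset X} (he : ¬ e ⊆ S.F₁ ∪ S.F₁') :
    S.kept₁.filter (e ⊆ ·) = S.K₁.filter (e ⊆ ·) := by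
  rw [filter_kept₁, erase_eq_of_notMem, erase_eq_of_notMem]
  · exact fun h => he ((mem_filter.1 h).2.trans subset_union_left)
  · exact fun h => he ((mem_filter.1 (mem_of_mem_erase h)).2.trans subset_union_right)

lemma exists_mem_kept₁_superset {e : Finset X} (he : e ∈ triEdges S.K₁) :
    ∃ T ∈ S.kept₁, e ⊆ T := by
  rw [← filter_nonempty_iff, ← card_pos]
  obtain ⟨T, hT, heT, hc⟩ := mem_triEdges.1 he
  by_cases hsub : e ⊆ S.F₁ ∪ S.F₁'
  · rcases S.subset_or_subset_of_subset_union hT heT hsub with h | h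
    · rw [S.card_filter_kept₁_of_subset_F₁ h hc]; norm_num
    · rw [← S.flip_kept₁, S.flip.card_filter_kept₁_of_subset_F₁ h hc]; norm_num
  · rw [S.filter_kept₁_of_not_subset hsub, S.surface₁.2.2.1 e he]; norm_num

lemma flip_kept₂ : S.flip.kept₂ = S.kept₂ := erase_right_comm

lemma swap_kept₁ : S.swap.kept₁ = S.kept₂ := rfl

lemma triEdges_kept₁ : triEdges S.kept₁ = triEdges S.K₁ := by
  refine (triEdges_mono S.kept₁_subset).antisymm fun e he => ?_
  obtain ⟨T, hT, heT⟩ := S.exists_mem_kept₁_superset he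
  exact mem_triEdges_of_subset hT heT (card_eq_two_of_mem_triEdges he)

lemma triEdges_glued : triEdges S.glued =
    (triEdges S.K₁).image (image S.ι₁) ∪ (triEdges S.K₂).image (image S.ι₂) := by
  rw [glued, triEdges_union, triEdges_image S.injective_ι₁, triEdges_image S.injective_ι₂,
    S.triEdges_kept₁, ← S.swap_kept₁, S.swap.triEdges_kept₁]
  rfl

lemma card_filter_glued_image (e : Finset X) :
    (S.glued.filter (e.image S.ι₁ ⊆ ·)).card = (S.kept₁.filter (e ⊆ ·)).card +
      (S.kept₂.filter fun T => e.image S.ι₁ ⊆ T.image S.ι₂).card := by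
  rw [glued, filter_union, filter_image, filter_image,
    card_union_of_disjoint (S.disjoint_image_image (filter_subset _ _) _),
    card_image_of_injective _ (image_injective S.injective_ι₁),
    card_image_of_injective _ (image_injective S.injective_ι₂)]
  simp only [image_subset_image_iff S.injective_ι₁]

lemma card_filter_kept_of_subset_F₁ {e : Finset X} (he : e ⊆ S.F₁) (hc : e.card = 2) :
    (S.kept₁.filter (e ⊆ ·)).card +
      (S.kept₂.filter fun T => e.image S.ι₁ ⊆ T.image S.ι₂).card = 2 := by
  obtain ⟨e₂, he₂, heq, hc₂⟩ := S.exists_image_eq_of_subset_F₁ he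
  simp_rw [← heq, image_subset_image_iff S.injective_ι₂]
  rw [S.card_filter_kept₁_of_subset_F₁ he hc, ← S.swap_kept₁,
    S.swap.card_filter_kept₁_of_subset_F₁ he₂ (hc₂.trans hc)]

lemma card_filter_glued_image_of_mem {e : Finset X} (he : e ∈ triEdges S.K₁) :
    (S.glued.filter (e.image S.ι₁ ⊆ ·)).card = 2 := by
  rw [S.card_filter_glued_image]
  obtain ⟨T, hT, heT, hc⟩ := mem_triEdges.1 he
  by_cases hsub : e ⊆ S.F₁ ∪ S.F₁'
  · rcases S.subset_or_subset_of_subset_union hT heT hsub with h | h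
    · exact S.card_filter_kept_of_subset_F₁ h hc
    · have := S.flip.card_filter_kept_of_subset_F₁ h hc
      rwa [flip_kept₁, flip_kept₂] at this
  · rw [S.filter_kept₁_of_not_subset hsub, S.surface₁.2.2.1 e he, add_eq_left, card_eq_zero,
      filter_eq_empty_iff]
    exact fun T _ h => hsub (S.subset_union_of_image_subset h)

lemma card_filter_glued {e : Finset W} (he : e ∈ triEdges S.glued) :
    (S.glued.filter (e ⊆ ·)).card = 2 := by
  rw [S.triEdges_glued, mem_union, mem_image, mem_image] at he
  rcases he with ⟨e₁, he₁, rfl⟩ | ⟨e₂, he₂, rfl⟩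
  · exact S.card_filter_glued_image_of_mem he₁
  · exact S.swap_glued ▸ S.swap.card_filter_glued_image_of_mem he₂

lemma image_mem_glued {T : Finset X} (hT : T ∈ S.kept₁) : T.image S.ι₁ ∈ S.glued :=
  S.mem_glued.2 (Or.inl ⟨T, hT, rfl⟩)

lemma card_eq_three_of_mem_glued {T : Finset W} (hT : T ∈ S.glued) : T.card = 3 := by
  rcases S.mem_glued.1 hT with ⟨T₁, hT₁, rfl⟩ | ⟨T₂, hT₂, rfl⟩
  · rw [card_image_of_injective _ S.injective_ι₁, S.card_eq_three_of_mem (S.kept₁_subset hT₁)]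
  · rw [card_image_of_injective _ S.injective_ι₂,
      S.swap.card_eq_three_of_mem (S.swap.kept₁_subset hT₂)]

lemma cplxGraph_adj_ι₁ {a b : X} (h : (cplxGraph S.K₁).Adj a b) :
    (cplxGraph S.glued).Adj (S.ι₁ a) (S.ι₁ b) := by
  obtain ⟨hab, T, hT, ha, hb⟩ := h
  obtain ⟨T', hT', hsub⟩ := S.exists_mem_kept₁_superset (pair_mem_triEdges hT ha hb hab)
  exact ⟨S.injective_ι₁.ne hab, _, S.image_mem_glued hT',
    mem_image_of_mem _ (hsub (by simp)), mem_image_of_mem _ (hsub (by simp))⟩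

lemma linkGraph_adj_ι₁ {a x y : X} (h : (linkGraph S.kept₁ a).Adj x y) :
    (linkGraph S.glued (S.ι₁ a)).Adj (S.ι₁ x) (S.ι₁ y) := by
  obtain ⟨hxy, hxa, hya, hT⟩ := h
  refine ⟨S.injective_ι₁.ne hxy, S.injective_ι₁.ne hxa, S.injective_ι₁.ne hya, ?_⟩
  simpa [image_insert] using S.image_mem_glued hT

lemma mem_neighborSet_glued {a : X} {z : W} :
    z ∈ (cplxGraph S.glued).neighborSet (S.ι₁ a) ↔
      z ∈ S.ι₁ '' (cplxGraph S.K₁).neighborSet a ∨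
        ∃ b, S.ι₂ b = S.ι₁ a ∧ z ∈ S.ι₂ '' (cplxGraph S.K₂).neighborSet b := by
  constructor
  · rintro ⟨hne, T, hT, haT, hzT⟩
    rcases S.mem_glued.1 hT with ⟨T₁, hT₁, rfl⟩ | ⟨T₂, hT₂, rfl⟩
    · obtain ⟨x, hx, rfl⟩ := mem_image.1 hzT
      rw [S.injective_ι₁.mem_finset_image] at haT
      exact Or.inl ⟨x, ⟨fun h => hne (h ▸ rfl), T₁, S.kept₁_subset hT₁, haT, hx⟩, rfl⟩
    · obtain ⟨y, hy, rfl⟩ := mem_image.1 hzT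
      obtain ⟨b, hb, hba⟩ := mem_image.1 haT
      exact Or.inr ⟨b, hba, y,
        ⟨fun h => hne (h ▸ hba.symm), T₂, S.swap.kept₁_subset hT₂, hb, hy⟩, rfl⟩
  · rintro (⟨x, hx, rfl⟩ | ⟨b, hba, y, hy, rfl⟩)
    · exact S.cplxGraph_adj_ι₁ hx
    · exact hba ▸ S.swap_glued ▸ S.swap.cplxGraph_adj_ι₁ hy

lemma neighborSet_glued_of_notMem {a : X} (ha : a ∉ S.F₁ ∪ S.F₁') :
    (cplxGraph S.glued).neighborSet (S.ι₁ a) = S.ι₁ '' (cplxGraph S.K₁).neighborSet a := by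
  ext z
  rw [mem_neighborSet_glued, or_iff_left]
  rintro ⟨b, hba, -⟩
  exact ha (S.mem_of_ι₁_eq_ι₂ a b hba.symm)

lemma neighborSet_glued_of_ι₂_eq {a : X} {b : Y} (hba : S.ι₂ b = S.ι₁ a) :
    (cplxGraph S.glued).neighborSet (S.ι₁ a) =
      S.ι₁ '' (cplxGraph S.K₁).neighborSet a ∪ S.ι₂ '' (cplxGraph S.K₂).neighborSet b := by
  ext z
  rw [mem_neighborSet_glued, Set.mem_union]
  refine or_congr_right ⟨?_, fun h => ⟨b, hba, h⟩⟩
  rintro ⟨b', hb'a, h⟩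
  rwa [S.injective_ι₂ (hb'a.trans hba.symm)] at h

lemma connected_linkGraph_kept₁_of_mem_F₁ {a : X} (ha : a ∈ S.F₁) :
    ((linkGraph S.kept₁ a).induce ((cplxGraph S.K₁).neighborSet a)).Connected := by
  rw [kept₁, linkGraph_erase_of_notMem (disjoint_left.1 S.disjoint_F₁ ha)]
  exact connected_induce_linkGraph_erase (fun T hT => S.card_eq_three_of_mem hT)
    (S.surface₁.2.2.2 a (mem_univ a)) S.F₁_mem ha

lemma connected_linkGraph_glued_of_mem_F₁ {a : X} (ha : a ∈ S.F₁) :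
    ((linkGraph S.glued (S.ι₁ a)).induce
      ((cplxGraph S.glued).neighborSet (S.ι₁ a))).Connected := by
  obtain ⟨b, hb, hba⟩ := mem_image.1 (S.image_F₁ ▸ mem_image_of_mem S.ι₁ ha)
  obtain ⟨u, hu⟩ : (S.F₁.erase a).Nonempty := by
    rw [← card_pos, card_erase_of_mem ha, S.card_F₁]; norm_num
  obtain ⟨u', hu', hu'u⟩ := mem_image.1 (S.image_F₁ ▸ mem_image_of_mem S.ι₁ (mem_of_mem_erase hu))
  have hbu' : b ≠ u' := fun h =>
    ne_of_mem_erase hu (S.injective_ι₁ ((h ▸ hu'u).symm.trans hba))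
  have h₁ := (S.connected_linkGraph_kept₁_of_mem_F₁ ha).induce_image S.linkGraph_adj_ι₁
  have h₂ := (S.swap.connected_linkGraph_kept₁_of_mem_F₁ hb).induce_image S.swap.linkGraph_adj_ι₁
  rw [swap_glued] at h₂
  rw [S.neighborSet_glued_of_ι₂_eq hba]
  refine SimpleGraph.induce_union_connected h₁.preconnected (hba ▸ h₂.preconnected)
    ⟨S.ι₁ u, ⟨u, ⟨(ne_of_mem_erase hu).symm, _, S.F₁_mem, ha, mem_of_mem_erase hu⟩, rfl⟩,
      ⟨u', ⟨hbu', _, S.F₂_mem, hb, hu'⟩, hu'u⟩⟩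

lemma connected_linkGraph_glued_ι₁ (a : X) :
    ((linkGraph S.glued (S.ι₁ a)).induce
      ((cplxGraph S.glued).neighborSet (S.ι₁ a))).Connected := by
  by_cases ha : a ∈ S.F₁ ∪ S.F₁'
  · rcases mem_union.1 ha with ha | ha
    · exact S.connected_linkGraph_glued_of_mem_F₁ ha
    · exact S.flip_glued ▸ S.flip.connected_linkGraph_glued_of_mem_F₁ ha
  · obtain ⟨ha₁, ha₁'⟩ := not_or.1 (mt mem_union.2 ha)
    have hlink : linkGraph S.kept₁ a = linkGraph S.K₁ a := by
      rw [kept₁, linkGraph_erase_of_notMem ha₁', linkGraph_erase_of_notMem ha₁]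
    rw [S.neighborSet_glued_of_notMem ha]
    exact (hlink ▸ (S.surface₁.2.2.2 a (mem_univ a)).1).induce_image S.linkGraph_adj_ι₁

lemma connected_linkGraph_glued (w : W) :
    ((linkGraph S.glued w).induce ((cplxGraph S.glued).neighborSet w)).Connected := by
  rcases S.cover w with ⟨a, rfl⟩ | ⟨b, rfl⟩
  · exact S.connected_linkGraph_glued_ι₁ a
  · exact S.swap_glued ▸ S.swap.connected_linkGraph_glued_ι₁ b

lemma connected_cplxGraph_glued [Fintype W] :
    ((cplxGraph S.glued).induce (univ : Finset W)).Connected := by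
  obtain ⟨a, ha⟩ := S.F₁_nonempty
  obtain ⟨b, -, hba⟩ := mem_image.1 (S.image_F₁ ▸ mem_image_of_mem S.ι₁ ha)
  have h₁ := S.surface₁.2.1.induce_image S.cplxGraph_adj_ι₁
  have h₂ := S.swap.surface₁.2.1.induce_image S.swap.cplxGraph_adj_ι₁
  rw [swap_glued] at h₂
  have hcover : ((univ : Finset W) : Set W) =
      S.ι₁ '' (univ : Finset X) ∪ S.ι₂ '' (univ : Finset Y) := by
    ext w
    simpa [eq_comm] using S.cover w
  rw [hcover]
  exact SimpleGraph.induce_union_connected h₁.preconnected h₂.preconnected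
    ⟨S.ι₁ a, ⟨a, mem_univ a, rfl⟩, ⟨b, mem_univ b, hba⟩⟩

theorem isTriSurfaceOn_glued [Fintype W] : IsTriSurfaceOn univ S.glued :=
  ⟨fun T hT => ⟨S.card_eq_three_of_mem_glued hT, subset_univ T⟩, S.connected_cplxGraph_glued,
    fun _ he => S.card_filter_glued he,
    fun w _ => ⟨S.connected_linkGraph_glued w, ncard_neighborSet_linkGraph
      (fun _ hT => S.card_eq_three_of_mem_glued hT) (fun _ he => S.card_filter_glued he) w⟩⟩

lemma card_kept₁_add_two : S.kept₁.card + 2 = S.K₁.card := by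
  rw [kept₁, ← card_erase_add_one S.F₁_mem,
    ← card_erase_add_one (mem_erase.2 ⟨S.F₁_ne_F₁'.symm, S.F₁'_mem⟩)]

lemma card_glued_add_four : S.glued.card + 4 = S.K₁.card + S.K₂.card := by
  have h₁ := S.card_kept₁_add_two
  have h₂ : S.kept₂.card + 2 = S.K₂.card := S.swap.card_kept₁_add_two
  rw [glued, card_union_of_disjoint (S.disjoint_image_image subset_rfl _),
    card_image_of_injective _ (image_injective S.injective_ι₁),
    card_image_of_injective _ (image_injective S.injective_ι₂)]
  omega

lemma exists_triEdges_image_eq_of_subset_F₁ {e : Finset X} (he : e ⊆ S.F₁) (hc : e.card = 2) :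
    ∃ e₂ ∈ triEdges S.K₂, e₂.image S.ι₂ = e.image S.ι₁ := by
  obtain ⟨e₂, he₂, heq, hc₂⟩ := S.exists_image_eq_of_subset_F₁ he
  exact ⟨e₂, mem_triEdges_of_subset S.F₂_mem he₂ (hc₂.trans hc), heq⟩

lemma image_triEdges_inter :
    (triEdges S.K₁).image (image S.ι₁) ∩ (triEdges S.K₂).image (image S.ι₂) =
      (S.F₁.powersetCard 2 ∪ S.F₁'.powersetCard 2).image (image S.ι₁) := by
  ext e
  simp only [mem_inter, mem_image, mem_union, mem_powersetCard]
  constructor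
  · rintro ⟨⟨e₁, he₁, rfl⟩, e₂, -, heq⟩
    obtain ⟨T, hT, heT, hc⟩ := mem_triEdges.1 he₁
    refine ⟨e₁, ?_, rfl⟩
    rcases S.subset_or_subset_of_subset_union hT heT
      (S.subset_union_of_image_subset heq.symm.subset) with h | h
    exacts [Or.inl ⟨h, hc⟩, Or.inr ⟨h, hc⟩]
  · rintro ⟨e₁, ⟨h, hc⟩ | ⟨h, hc⟩, rfl⟩
    · exact ⟨⟨e₁, mem_triEdges_of_subset S.F₁_mem h hc, rfl⟩,
        S.exists_triEdges_image_eq_of_subset_F₁ h hc⟩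
    · exact ⟨⟨e₁, mem_triEdges_of_subset S.F₁'_mem h hc, rfl⟩,
        S.flip.exists_triEdges_image_eq_of_subset_F₁ h hc⟩

lemma card_triEdges_glued_add_six :
    (triEdges S.glued).card + 6 = (triEdges S.K₁).card + (triEdges S.K₂).card := by
  have hdisj : Disjoint (S.F₁.powersetCard 2) (S.F₁'.powersetCard 2) := by
    refine disjoint_left.2 fun e he he' => ?_
    obtain ⟨hsub, hc⟩ := mem_powersetCard.1 he
    obtain ⟨a, ha⟩ : e.Nonempty := card_pos.1 (by omega)
    exact disjoint_left.1 S.disjoint_F₁ (hsub ha) ((mem_powersetCard.1 he').1 ha)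
  have h := card_union_add_card_inter
    ((triEdges S.K₁).image (image S.ι₁)) ((triEdges S.K₂).image (image S.ι₂))
  rwa [← S.triEdges_glued, S.image_triEdges_inter,
    card_image_of_injective _ (image_injective S.injective_ι₁),
    card_image_of_injective _ (image_injective S.injective_ι₂),
    card_image_of_injective _ (image_injective S.injective_ι₁), card_union_of_disjoint hdisj,
    card_powersetCard, card_powersetCard, S.card_F₁, S.card_F₁'] at h

lemma card_univ_add_six (S : TriangleGluing X Y W) [Fintype W] :
    (univ : Finset W).card + 6 = (univ : Finset X).card + (univ : Finset Y).card := by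
  have hcover : (univ : Finset W) = univ.image S.ι₁ ∪ univ.image S.ι₂ := by
    ext w
    simpa using S.cover w
  have hinter : univ.image S.ι₁ ∩ univ.image S.ι₂ = (S.F₁ ∪ S.F₁').image S.ι₁ := by
    refine subset_antisymm (fun w hw => ?_)
      (subset_inter (image_subset_image (subset_univ _)) ?_)
    · obtain ⟨⟨a, -, rfl⟩, ⟨b, -, hba⟩⟩ := And.imp mem_image.1 mem_image.1 (mem_inter.1 hw)
      exact mem_image_of_mem _ (S.mem_of_ι₁_eq_ι₂ a b hba.symm)
    · rw [image_union, S.image_F₁, S.image_F₁', ← image_union]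
      exact image_subset_image (subset_univ _)
  have h := card_union_add_card_inter (univ.image S.ι₁) (univ.image S.ι₂)
  rwa [← hcover, hinter, card_image_of_injective _ S.injective_ι₁,
    card_image_of_injective _ S.injective_ι₂, card_image_of_injective _ S.injective_ι₁,
    card_union_of_disjoint S.disjoint_F₁, S.card_F₁, S.card_F₁'] at h

theorem eulerCharOn_glued [Fintype W] :
    eulerCharOn univ S.glued = eulerCharOn univ S.K₁ + eulerCharOn univ S.K₂ - 4 := by
  have hV := S.card_univ_add_six
  have hE := S.card_triEdges_glued_add_six
  have hF := S.card_glued_add_four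
  simp only [eulerCharOn]
  omega

lemma image_mem_kept₁ {σ₁ : X → X} (hCS₁ : IsCSOn univ S.K₁ σ₁)
    (hF₁' : S.F₁' = S.F₁.image σ₁) {T : Finset X} (hT : T ∈ S.kept₁) : T.image σ₁ ∈ S.kept₁ := by
  have hσ₁ : Function.Involutive σ₁ := fun a => hCS₁.2.1 a (mem_univ a)
  obtain ⟨hTK, hTF, hTF'⟩ := S.mem_kept₁.1 hT
  refine S.mem_kept₁.2 ⟨hCS₁.2.2.1 T hTK, fun h => hTF' ?_, fun h => hTF ?_⟩
  · rw [hF₁', ← h, image_image, hσ₁.comp_self, image_id]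
  · exact image_injective hσ₁.injective (h.trans hF₁')

theorem isCSOn_glued [Fintype W] {σ₁ : X → X} {σ₂ : Y → Y} {σ : W → W}
    (hCS₁ : IsCSOn univ S.K₁ σ₁) (hCS₂ : IsCSOn univ S.K₂ σ₂)
    (hF₁' : S.F₁' = S.F₁.image σ₁) (hF₂' : S.F₂' = S.F₂.image σ₂)
    (h₁ : ∀ a, σ (S.ι₁ a) = S.ι₁ (σ₁ a)) (h₂ : ∀ b, σ (S.ι₂ b) = S.ι₂ (σ₂ b)) :
    IsCSOn univ S.glued σ := by
  refine ⟨fun _ _ => mem_coe.2 (mem_univ _), fun w _ => ?_, fun T hT => ?_, fun w _ => ?_,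
    fun e he => ?_, fun T hT => ?_⟩
  · rcases S.cover w with ⟨a, rfl⟩ | ⟨b, rfl⟩
    · rw [h₁, h₁, hCS₁.2.1 a (mem_univ a)]
    · rw [h₂, h₂, hCS₂.2.1 b (mem_univ b)]
  · rcases S.mem_glued.1 hT with ⟨T₁, hT₁, rfl⟩ | ⟨T₂, hT₂, rfl⟩
    · rw [image_comm h₁]
      exact S.image_mem_glued (S.image_mem_kept₁ hCS₁ hF₁' hT₁)
    · rw [image_comm h₂]
      exact S.swap_glued ▸ S.swap.image_mem_glued (S.swap.image_mem_kept₁ hCS₂ hF₂' hT₂)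
  · rcases S.cover w with ⟨a, rfl⟩ | ⟨b, rfl⟩
    · rw [h₁]
      exact S.injective_ι₁.ne (hCS₁.2.2.2.1 a (mem_univ a))
    · rw [h₂]
      exact S.injective_ι₂.ne (hCS₂.2.2.2.1 b (mem_univ b))
  · rw [S.triEdges_glued, mem_union, mem_image, mem_image] at he
    rcases he with ⟨e₁, he₁, rfl⟩ | ⟨e₂, he₂, rfl⟩
    · rw [image_comm h₁]
      exact (image_injective S.injective_ι₁).ne (hCS₁.2.2.2.2.1 e₁ he₁)
    · rw [image_comm h₂]
      exact (image_injective S.injective_ι₂).ne (hCS₂.2.2.2.2.1 e₂ he₂)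
  · rcases S.mem_glued.1 hT with ⟨T₁, hT₁, rfl⟩ | ⟨T₂, hT₂, rfl⟩
    · rw [image_comm h₁]
      exact (image_injective S.injective_ι₁).ne (hCS₁.2.2.2.2.2 T₁ (S.kept₁_subset hT₁))
    · rw [image_comm h₂]
      exact (image_injective S.injective_ι₂).ne
        (hCS₂.2.2.2.2.2 T₂ (S.swap.kept₁_subset hT₂))

end TriangleGluing

/-- `q` is the quotient map of `V₁ ⊕ V₂` by the identifications of `Glue`. -/
def IsGlueQuotient {V₁ V₂ W : Type*} [DecidableEq V₁] [DecidableEq V₂] (σ₁ : V₁ → V₁)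
    (σ₂ : V₂ → V₂) (F₁ : Finset V₁) (φ : V₁ → V₂) (q : V₁ ⊕ V₂ → W) : Prop :=
  ∀ x y, q x = q y ↔ x = y ∨ Glue σ₁ σ₂ F₁ φ x y ∨ Glue σ₁ σ₂ F₁ φ y x

namespace IsGlueQuotient

variable {V₁ V₂ W : Type*} [DecidableEq V₁] [DecidableEq V₂]
  {σ₁ : V₁ → V₁} {σ₂ : V₂ → V₂} {F₁ : Finset V₁} {F₂ : Finset V₂} {φ : V₁ → V₂}
  {q : V₁ ⊕ V₂ → W}

lemma injective_inl (hq : IsGlueQuotient σ₁ σ₂ F₁ φ q) : Function.Injective (q ∘ Sum.inl) :=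
  fun _ _ h => by simpa [Glue] using (hq _ _).1 h

lemma injective_inr (hq : IsGlueQuotient σ₁ σ₂ F₁ φ q) : Function.Injective (q ∘ Sum.inr) :=
  fun _ _ h => by simpa [Glue] using (hq _ _).1 h

lemma inl_eq_inr_iff (hq : IsGlueQuotient σ₁ σ₂ F₁ φ q) {a : V₁} {b : V₂} :
    q (Sum.inl a) = q (Sum.inr b) ↔
      (a ∈ F₁ ∧ b = φ a) ∨ (a ∈ F₁.image σ₁ ∧ b = σ₂ (φ (σ₁ a))) := by
  simp [hq _ _, Glue]

lemma mem_union_of_inl_eq_inr (hq : IsGlueQuotient σ₁ σ₂ F₁ φ q) {a : V₁} {b : V₂}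
    (h : q (Sum.inl a) = q (Sum.inr b)) : a ∈ F₁ ∪ F₁.image σ₁ := by
  rcases hq.inl_eq_inr_iff.1 h with ⟨ha, -⟩ | ⟨ha, -⟩
  exacts [mem_union_left _ ha, mem_union_right _ ha]

lemma image_F₁ [DecidableEq W] (hq : IsGlueQuotient σ₁ σ₂ F₁ φ q) (hφ : Set.BijOn φ F₁ F₂) :
    F₁.image (q ∘ Sum.inl) = F₂.image (q ∘ Sum.inr) := by
  rw [show F₂ = F₁.image φ from coe_injective (by rw [coe_image, hφ.image_eq]), image_image]
  exact image_congr fun a ha => hq.inl_eq_inr_iff.2 (Or.inl ⟨ha, rfl⟩)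

lemma image_image_F₁ [DecidableEq W] (hq : IsGlueQuotient σ₁ σ₂ F₁ φ q)
    (hφ : Set.BijOn φ F₁ F₂) (hσ₁ : Function.Involutive σ₁) :
    (F₁.image σ₁).image (q ∘ Sum.inl) = (F₂.image σ₂).image (q ∘ Sum.inr) := by
  have hF₂ : F₂.image σ₂ = (F₁.image σ₁).image (fun a => σ₂ (φ (σ₁ a))) := by
    rw [show F₂ = F₁.image φ from coe_injective (by rw [coe_image, hφ.image_eq]), image_image,
      image_image]
    exact image_congr fun a _ => by simp [hσ₁ a]
  rw [hF₂, image_image (f := fun a => σ₂ (φ (σ₁ a)))]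
  exact image_congr fun a ha => hq.inl_eq_inr_iff.2 (Or.inr ⟨ha, rfl⟩)

end IsGlueQuotient

/-- Connected sum of two centrally symmetric triangulated closed surfaces along a
pair of triangle orbits: the result is a centrally symmetric triangulated closed
surface, with Euler characteristic `χ(K₁) + χ(K₂) - 4`. -/
theorem glue_CS_surfaces {V₁ V₂ W : Type} [Fintype V₁] [DecidableEq V₁]
    [Fintype V₂] [DecidableEq V₂] [Fintype W] [DecidableEq W]
    (K₁ : Finset (Finset V₁)) (K₂ : Finset (Finset V₂))
    (σ₁ : V₁ → V₁) (σ₂ : V₂ → V₂)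
    (hK₁ : IsTriSurfaceOn Finset.univ K₁) (hK₂ : IsTriSurfaceOn Finset.univ K₂)
    (hCS₁ : IsCSOn Finset.univ K₁ σ₁) (hCS₂ : IsCSOn Finset.univ K₂ σ₂)
    (F₁ : Finset V₁) (F₂ : Finset V₂) (hF₁ : F₁ ∈ K₁) (hF₂ : F₂ ∈ K₂)
    (hedge₁ : ∀ a ∈ F₁, ∀ b ∈ F₁.image σ₁, ({a, b} : Finset V₁) ∉ triEdges K₁)
    (hedge₂ : ∀ a ∈ F₂, ∀ b ∈ F₂.image σ₂, ({a, b} : Finset V₂) ∉ triEdges K₂)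
    (φ : V₁ → V₂) (hφ : Set.BijOn φ (F₁ : Set V₁) (F₂ : Set V₂))
    (q : V₁ ⊕ V₂ → W) (hq_surj : Function.Surjective q)
    (hq : ∀ x y : V₁ ⊕ V₂,
      q x = q y ↔ x = y ∨ Glue σ₁ σ₂ F₁ φ x y ∨ Glue σ₁ σ₂ F₁ φ y x) :
    IsTriSurfaceOn Finset.univ (glueComplex K₁ K₂ σ₁ σ₂ F₁ F₂ q) ∧
    (∀ σW : W → W,
      (∀ a : V₁, σW (q (Sum.inl a)) = q (Sum.inl (σ₁ a))) →
      (∀ b : V₂, σW (q (Sum.inr b)) = q (Sum.inr (σ₂ b))) →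
      IsCSOn Finset.univ (glueComplex K₁ K₂ σ₁ σ₂ F₁ F₂ q) σW) ∧
    eulerCharOn Finset.univ (glueComplex K₁ K₂ σ₁ σ₂ F₁ F₂ q) =
      eulerCharOn Finset.univ K₁ + eulerCharOn Finset.univ K₂ - 4 := by
  replace hq : IsGlueQuotient σ₁ σ₂ F₁ φ q := hq
  let S : TriangleGluing V₁ V₂ W :=
    { K₁, K₂, F₁, F₂
      F₁' := F₁.image σ₁
      F₂' := F₂.image σ₂
      ι₁ := q ∘ Sum.inl
      ι₂ := q ∘ Sum.inr
      surface₁ := hK₁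
      surface₂ := hK₂
      F₁_mem := hF₁
      F₁'_mem := hCS₁.2.2.1 F₁ hF₁
      F₂_mem := hF₂
      F₂'_mem := hCS₂.2.2.1 F₂ hF₂
      pair_notMem₁ := hedge₁
      pair_notMem₂ := hedge₂
      injective_ι₁ := hq.injective_inl
      injective_ι₂ := hq.injective_inr
      image_F₁ := hq.image_F₁ hφ
      image_F₁' := hq.image_image_F₁ hφ fun a => hCS₁.2.1 a (mem_univ a)
      mem_of_ι₁_eq_ι₂ _ _ := hq.mem_union_of_inl_eq_inr
      cover w := by
        obtain ⟨a | b, rfl⟩ := hq_surj w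
        exacts [Or.inl ⟨a, rfl⟩, Or.inr ⟨b, rfl⟩] }
  exact ⟨S.isTriSurfaceOn_glued, fun σW h₁ h₂ => S.isCSOn_glued hCS₁ hCS₂ rfl rfl h₁ h₂,
    S.eulerCharOn_glued⟩
end

section
/- On the vertex set {1, 2, ..., 24}, the family of 12 hexagonal faces (given as cycles) [1,2,3,8,7,6], [3,4,5,10,9,8], [5,6,7,12,11,10], [7,8,9,14,13,12], [9,10,11,16,15,14], [11,12,13,18,17,16], [13,14,15,20,19,18], [15,16,17,22,21,20], [17,18,19,24,23,22], [19,20,21,2,1,24], [21,22,23,4,3,2], [23,24,1,6,5,4] is a polyhedral map with Euler characteristic 0 (a map on the torus) all of whose faces are hexagons, and it is centrally symmetric under the involution (1 13)(2 14)(3 15)(4 16)(5 17)(6 18)(7 19)(8 20)(9 21)(10 22)(11 23)(12 24). -/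
section Map

variable {V : Type*} [DecidableEq V]

/-- The vertex set of a face, a face being recorded by its set of edges. -/
def faceVerts (F : Finset (Finset V)) : Finset V := F.biUnion id

/-- The graph determined by a set `E` of (2-element) edges. -/
def edgeGraph (E : Finset (Finset V)) : SimpleGraph V where
  Adj a b := a ≠ b ∧ ({a, b} : Finset V) ∈ E
  symm := by
    constructor
    rintro a b ⟨h1, h2⟩
    refine ⟨h1.symm, ?_⟩
    rwa [Finset.pair_comm b a]
  loopless := ⟨fun a h => h.1 rfl⟩

/-- A face, recorded by its set of edges, is a cycle (of length `≥ 3`): every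
edge has two vertices and the graph it spans is a single cycle. -/
def IsCycleFace (F : Finset (Finset V)) : Prop :=
  (∀ e ∈ F, e.card = 2) ∧
  IsSingleCycle ((edgeGraph F).induce (faceVerts F : Set V))

/-- The edges of a map, a map being recorded as the set of its faces,
each face recorded as its set of edges. -/
def mapEdges (𝓕 : Finset (Finset (Finset V))) : Finset (Finset V) := 𝓕.biUnion id

/-- Two faces are adjacent at `v` if they share an edge through `v`. -/
def vertexFaceGraph (v : V) : SimpleGraph (Finset (Finset V)) where
  Adj F G := F ≠ G ∧ ∃ e : Finset V, v ∈ e ∧ e ∈ F ∧ e ∈ G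
  symm := by
    constructor
    rintro F G ⟨h1, e, he, hF, hG⟩
    exact ⟨h1.symm, e, he, hG, hF⟩
  loopless := ⟨fun F h => h.1 rfl⟩

/-- The faces of the map containing the vertex `v`. -/
def facesAt (𝓕 : Finset (Finset (Finset V))) (v : V) : Finset (Finset (Finset V)) :=
  𝓕.filter fun F => v ∈ faceVerts F

/-- `𝓕` is a polyhedral map on the vertex set `W`: every face is a cycle on vertices
of `W`, the underlying graph is connected, every edge lies in exactly two faces,
two distinct faces meet in at most a vertex or a single common edge, and the faces
at every vertex form a single cycle, consecutive ones sharing an edge through `v`. -/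
def IsPolyMapOn (W : Finset V) (𝓕 : Finset (Finset (Finset V))) : Prop :=
  (∀ F ∈ 𝓕, IsCycleFace F ∧ faceVerts F ⊆ W) ∧
  ((edgeGraph (mapEdges 𝓕)).induce (W : Set V)).Connected ∧
  (∀ e ∈ mapEdges 𝓕, (𝓕.filter fun F => e ∈ F).card = 2) ∧
  (∀ F ∈ 𝓕, ∀ G ∈ 𝓕, F ≠ G →
    (faceVerts F ∩ faceVerts G).card ≤ 1 ∨
    ((faceVerts F ∩ faceVerts G).card = 2 ∧ F ∩ G = {faceVerts F ∩ faceVerts G})) ∧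
  (∀ v ∈ W, IsSingleCycle ((vertexFaceGraph v).induce (facesAt 𝓕 v : Set (Finset (Finset V)))))

/-- Euler characteristic of the map `𝓕` on vertex set `W`. -/
def eulerCharMapOn (W : Finset V) (𝓕 : Finset (Finset (Finset V))) : ℤ :=
  (W.card : ℤ) - ((mapEdges 𝓕).card : ℤ) + (𝓕.card : ℤ)

/-- Orientability: each face cycle can be directed so that each edge receives
opposite directions from the two faces containing it. -/
def IsOrientableMap (𝓕 : Finset (Finset (Finset V))) : Prop :=
  ∃ ori : Finset (Finset V) → V → V → Bool,
    (∀ F ∈ 𝓕, ∀ a b : V, a ≠ b → ({a, b} : Finset V) ∈ F → ori F a b = !ori F b a) ∧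
    (∀ F ∈ 𝓕, ∀ u w x : V, u ≠ x → ({u, w} : Finset V) ∈ F → ({w, x} : Finset V) ∈ F →
      ori F u w = ori F w x) ∧
    (∀ F ∈ 𝓕, ∀ G ∈ 𝓕, F ≠ G → ∀ a b : V, a ≠ b → ({a, b} : Finset V) ∈ F →
      ({a, b} : Finset V) ∈ G → ori F a b = ori G b a)

/-- The map `𝓕` on vertex set `W` is centrally symmetric under the involution `σ`:
`σ` maps faces to faces and fixes no vertex, no edge and no face (faces compared
as vertex sets). -/
def IsCSMapOn (W : Finset V) (𝓕 : Finset (Finset (Finset V))) (σ : V → V) : Prop :=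
  Set.MapsTo σ (W : Set V) (W : Set V) ∧
  (∀ v ∈ W, σ (σ v) = v) ∧
  (∀ F ∈ 𝓕, F.image (Finset.image σ) ∈ 𝓕) ∧
  (∀ v ∈ W, σ v ≠ v) ∧
  (∀ e ∈ mapEdges 𝓕, e.image σ ≠ e) ∧
  (∀ F ∈ 𝓕, (faceVerts F).image σ ≠ faceVerts F)

end Map

/-- The 12 hexagonal faces of the torus map, each face given by its set of edges. -/
def hexTorusFaces : Finset (Finset (Finset ℕ)) :=
  {{{1, 2}, {2, 3}, {3, 8}, {8, 7}, {7, 6}, {6, 1}},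
    {{3, 4}, {4, 5}, {5, 10}, {10, 9}, {9, 8}, {8, 3}},
    {{5, 6}, {6, 7}, {7, 12}, {12, 11}, {11, 10}, {10, 5}},
    {{7, 8}, {8, 9}, {9, 14}, {14, 13}, {13, 12}, {12, 7}},
    {{9, 10}, {10, 11}, {11, 16}, {16, 15}, {15, 14}, {14, 9}},
    {{11, 12}, {12, 13}, {13, 18}, {18, 17}, {17, 16}, {16, 11}},
    {{13, 14}, {14, 15}, {15, 20}, {20, 19}, {19, 18}, {18, 13}},
    {{15, 16}, {16, 17}, {17, 22}, {22, 21}, {21, 20}, {20, 15}},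
    {{17, 18}, {18, 19}, {19, 24}, {24, 23}, {23, 22}, {22, 17}},
    {{19, 20}, {20, 21}, {21, 2}, {2, 1}, {1, 24}, {24, 19}},
    {{21, 22}, {22, 23}, {23, 4}, {4, 3}, {3, 2}, {2, 21}},
    {{23, 24}, {24, 1}, {1, 6}, {6, 5}, {5, 4}, {4, 23}}}

/-- The involution `(1 13)(2 14) ... (12 24)` of `{1, ..., 24}`. -/
def hexTorusInvolution : ℕ → ℕ := fun n => if n ≤ 12 then n + 12 else n - 12

instance instDecidableIsSingleCycle {α : Type*} [Fintype α] [DecidableEq α] (G : SimpleGraph α)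
    [DecidableRel G.Adj] : Decidable (IsSingleCycle G) :=
  decidable_of_iff (G.Connected ∧ ∀ a, (G.neighborFinset a).card = 2) <| by
    simp only [IsSingleCycle, SimpleGraph.neighborFinset_def, Set.ncard_eq_toFinset_card']

section Map

variable {V : Type*} [DecidableEq V]

instance (E : Finset (Finset V)) : DecidableRel (edgeGraph E).Adj := fun a b =>
  inferInstanceAs (Decidable (a ≠ b ∧ _))

instance (v : V) : DecidableRel (vertexFaceGraph v).Adj := fun F G =>
  decidable_of_iff (F ≠ G ∧ ∃ e ∈ F, v ∈ e ∧ e ∈ G) <| by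
    simp only [vertexFaceGraph, and_congr_right_iff]
    exact fun _ => ⟨fun ⟨e, hF, hv, hG⟩ => ⟨e, hv, hF, hG⟩, fun ⟨e, hv, hF, hG⟩ => ⟨e, hF, hv, hG⟩⟩

instance (F : Finset (Finset V)) : Decidable (IsCycleFace F) :=
  inferInstanceAs (Decidable (_ ∧ _))

end Map

theorem SimpleGraph.induce_Icc_connected_of_adj_succ {G : SimpleGraph ℕ} {a b : ℕ} (hab : a ≤ b)
    (hadj : ∀ n, a ≤ n → n < b → G.Adj n (n + 1)) : (G.induce (Set.Icc a b)).Connected := by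
  have reachable_from_a : ∀ n (hn : n ∈ Set.Icc a b),
      (G.induce (Set.Icc a b)).Reachable ⟨a, le_rfl, hab⟩ ⟨n, hn⟩ := by
    rintro n ⟨han, hnb⟩
    induction n, han using Nat.le_induction with
    | base => rfl
    | succ n han ih =>
      exact (ih (by omega)).trans (Adj.reachable (hadj n han (by omega)))
  have : Nonempty (Set.Icc a b) := ⟨⟨a, le_rfl, hab⟩⟩
  exact ⟨fun u v => (reachable_from_a u u.2).symm.trans (reachable_from_a v v.2)⟩

theorem hexTorus_edgeGraph_connected :
    ((edgeGraph (mapEdges hexTorusFaces)).induce (Finset.Icc 1 24 : Set ℕ)).Connected := by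
  have hpath : ∀ n ∈ Finset.Ico 1 24, ({n, n + 1} : Finset ℕ) ∈ mapEdges hexTorusFaces := by
    decide +kernel
  rw [Finset.coe_Icc]
  exact SimpleGraph.induce_Icc_connected_of_adj_succ (by norm_num) fun n h1 h24 =>
    ⟨n.succ_ne_self.symm, hpath n (Finset.mem_Ico.2 ⟨h1, h24⟩)⟩

theorem hexTorusFaces_isPolyMapOn : IsPolyMapOn (Finset.Icc 1 24) hexTorusFaces :=
  ⟨by decide +kernel, hexTorus_edgeGraph_connected, by decide +kernel, by decide +kernel,
    by decide +kernel⟩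

theorem hexTorusInvolution_isCSMapOn :
    IsCSMapOn (Finset.Icc 1 24) hexTorusFaces hexTorusInvolution := by
  have hσ : ∀ v ∈ Finset.Icc 1 24, hexTorusInvolution v ∈ Finset.Icc 1 24 ∧
      hexTorusInvolution (hexTorusInvolution v) = v ∧ hexTorusInvolution v ≠ v := by
    decide +kernel
  exact ⟨fun v hv => (hσ v hv).1, fun v hv => (hσ v hv).2.1, by decide +kernel,
    fun v hv => (hσ v hv).2.2, by decide +kernel, by decide +kernel⟩

/-- The given 12 hexagons on `{1, ..., 24}` form a polyhedral map with Euler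
characteristic 0 (a torus) all of whose faces are hexagons, and it is centrally
symmetric under the involution `(1 13)(2 14) ... (12 24)`. -/
theorem hexagonal_torus_is_CS :
    IsPolyMapOn (Finset.Icc 1 24) hexTorusFaces ∧
    (∀ F ∈ hexTorusFaces, F.card = 6) ∧
    eulerCharMapOn (Finset.Icc 1 24) hexTorusFaces = 0 ∧
    IsCSMapOn (Finset.Icc 1 24) hexTorusFaces hexTorusInvolution :=
  ⟨hexTorusFaces_isPolyMapOn, by decide +kernel, by decide +kernel, hexTorusInvolution_isCSMapOn⟩
end
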